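/- For 0<|q|<1, 0<|p|<1, |x|<1, |xy|<1: (1−q^a)·Ψ₁(q^{a+1},p^b;p^c,q^d;q,p,x,xy) = (1−q^a)·Ψ₁(q^a,p^b;p^c,q^d;q,p,x,xy) + (1−q)q^a x·D_{x,q}[Ψ₁(q^a,p^b;p^c,q^d;q,p,x,xy)], where D_{x,q} acts on both occurrences of x (i.e., on the function x ↦ Ψ₁(…;x,xy)). -/

import Mathlib

/-!
Both sides are double power series in `(x, xy)`, and the identity holds coefficientwise: the
`q`-difference turns the `(k, ℓ)` term of `Ψ₁(qᵃ; x, xy)` into its multiple by `1 - q^(k+ℓ)`, and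
`(1 - qᵃ)(q^(a+1); q)ₙ = (qᵃ; q)ₙ (1 - q^(a+n))` with `n = k + ℓ`. Summing termwise is justified
because the partial `q`-Pochhammer products converge, so both they and their inverses stay
bounded, and the series are dominated by geometric ones.
-/

open scoped BigOperators
open Filter

/-- q-shifted factorial `(z;q)_k`. -/
noncomputable def qPoch (q z : ℂ) (k : ℕ) : ℂ :=
  ∏ r ∈ Finset.range k, (1 - z * q ^ r)

/-- infinite q-shifted factorial `(z;q)_∞`. -/
noncomputable def qPochInf (q z : ℂ) : ℂ := ∏' r : ℕ, (1 - z * q ^ r)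

/-- bibasic Humbert function `Ψ₁(A,B;C,D;q,p,x,y)` with `A=qᵃ, B=pᵇ, C=pᶜ, D=q^d`. -/
noncomputable def Psi1 (q p A B C D x y : ℂ) : ℂ :=
  ∑' kl : ℕ × ℕ,
    qPoch q A (kl.1 + kl.2) * qPoch p B kl.2 /
      (qPoch p C kl.2 * qPoch q D kl.1 * qPoch q q kl.1 * qPoch p p kl.2) *
      x ^ kl.1 * y ^ kl.2

/-- bibasic Humbert function `Ψ₂(A;B,C;q,p,x,y)` with `A=qᵃ, B=pᵇ, C=qᶜ`. -/
noncomputable def Psi2 (q p A B C x y : ℂ) : ℂ :=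
  ∑' kl : ℕ × ℕ,
    qPoch q A (kl.1 + kl.2) /
      (qPoch p B kl.2 * qPoch q C kl.1 * qPoch q q kl.1 * qPoch p p kl.2) *
      x ^ kl.1 * y ^ kl.2

/-- the q-difference operator `D_{x,q}`. -/
noncomputable def qDiff (q : ℂ) (f : ℂ → ℂ) : ℂ → ℂ :=
  fun x => (f x - f (q * x)) / ((1 - q) * x)

/-- basic hypergeometric series `₂φ₁(A,B;C;q,x)`. -/
noncomputable def phi21 (q A B C x : ℂ) : ℂ :=
  ∑' k : ℕ, qPoch q A k * qPoch q B k / (qPoch q C k * qPoch q q k) * x ^ k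

/-- basic confluent hypergeometric series `₁φ₁(A;C;q,z)`. -/
noncomputable def phi11 (q A C z : ℂ) : ℂ :=
  ∑' k : ℕ, qPoch q A k / (qPoch q C k * qPoch q q k) *
    (-1) ^ k * q ^ (k * (k - 1) / 2) * z ^ k

open Topology

section QPochhammer

variable {q : ℂ}

lemma qPoch_succ (q z : ℂ) (n : ℕ) : qPoch q z (n + 1) = qPoch q z n * (1 - z * q ^ n) :=
  Finset.prod_range_succ _ _

lemma one_sub_mul_qPoch_mul (q A : ℂ) (n : ℕ) :
    (1 - A) * qPoch q (A * q) n = qPoch q A n * (1 - A * q ^ n) := by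
  induction n with
  | zero => simp [qPoch]
  | succ n ih =>
    rw [qPoch_succ, qPoch_succ]
    linear_combination (1 - A * q * q ^ n) * ih

lemma summable_norm_mul_pow (hq : ‖q‖ < 1) (z : ℂ) : Summable fun r : ℕ => ‖z * q ^ r‖ := by
  simpa only [norm_mul, norm_pow] using
    (summable_geometric_of_lt_one (norm_nonneg q) hq).mul_left ‖z‖

lemma tendsto_qPoch (hq : ‖q‖ < 1) (z : ℂ) :
    Tendsto (qPoch q z) atTop (𝓝 (qPochInf q z)) := by
  have : Multipliable fun r : ℕ => 1 + -(z * q ^ r) :=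
    multipliable_one_add_of_summable (by simpa only [norm_neg] using summable_norm_mul_pow hq z)
  simp only [← sub_eq_add_neg] at this
  exact this.tendsto_prod_tprod_nat

lemma tendsto_inv_norm_qPoch (hq : ‖q‖ < 1) (z : ℂ) :
    Tendsto (fun k => ‖qPoch q z k‖⁻¹) atTop (𝓝 ‖qPochInf q z‖⁻¹) := by
  by_cases hvanish : ∃ r, 1 - z * q ^ r = 0
  · -- both sides are junk `0⁻¹ = 0`: the partial products are eventually `0`
    obtain ⟨r, hr⟩ := hvanish
    rw [qPochInf, tprod_of_exists_eq_zero ⟨r, hr⟩, norm_zero, inv_zero]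
    refine tendsto_const_nhds.congr' (eventually_atTop.mpr ⟨r + 1, fun k hk => ?_⟩)
    have hk : qPoch q z k = 0 := Finset.prod_eq_zero (Finset.mem_range.mpr (by omega)) hr
    simp [hk]
  · push Not at hvanish
    have hne : qPochInf q z ≠ 0 := by
      rw [qPochInf]
      have := tprod_one_add_ne_zero_of_summable (f := fun r : ℕ => -(z * q ^ r))
        (by simpa only [← sub_eq_add_neg] using hvanish)
        (by simpa only [norm_neg] using summable_norm_mul_pow hq z)
      simpa only [← sub_eq_add_neg] using this
    exact (tendsto_qPoch hq z).norm.inv₀ (norm_ne_zero_iff.mpr hne)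

lemma exists_norm_qPoch_le (hq : ‖q‖ < 1) (z : ℂ) : ∃ M, ∀ k, ‖qPoch q z k‖ ≤ M := by
  obtain ⟨M, hM⟩ := (tendsto_qPoch hq z).norm.bddAbove_range
  exact ⟨M, fun k => hM ⟨k, rfl⟩⟩

lemma exists_inv_norm_qPoch_le (hq : ‖q‖ < 1) (z : ℂ) : ∃ M, ∀ k, ‖qPoch q z k‖⁻¹ ≤ M := by
  obtain ⟨M, hM⟩ := (tendsto_inv_norm_qPoch hq z).bddAbove_range
  exact ⟨M, fun k => hM ⟨k, rfl⟩⟩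

end QPochhammer

lemma summable_mul_pow_mul_pow {𝕜 : Type*} [NormedField 𝕜] [CompleteSpace 𝕜]
    {c : ℕ × ℕ → 𝕜} {M : ℝ} (hc : ∀ kl, ‖c kl‖ ≤ M) {X Y : 𝕜} (hX : ‖X‖ < 1) (hY : ‖Y‖ < 1) :
    Summable fun kl : ℕ × ℕ => c kl * X ^ kl.1 * Y ^ kl.2 := by
  have hgeom : Summable fun kl : ℕ × ℕ => ‖X‖ ^ kl.1 * ‖Y‖ ^ kl.2 :=
    (summable_geometric_of_lt_one (norm_nonneg X) hX).mul_of_nonneg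
      (summable_geometric_of_lt_one (norm_nonneg Y) hY) (fun _ => by positivity)
      (fun _ => by positivity)
  refine (hgeom.mul_left M).of_norm_bounded fun kl => ?_
  rw [norm_mul, norm_mul, norm_pow, norm_pow, mul_assoc]
  gcongr
  exact hc kl

noncomputable def psi1Coeff (q p A B C D : ℂ) (kl : ℕ × ℕ) : ℂ :=
  qPoch q A (kl.1 + kl.2) * qPoch p B kl.2 /
    (qPoch p C kl.2 * qPoch q D kl.1 * qPoch q q kl.1 * qPoch p p kl.2)

section Psi1

variable {q p : ℂ}

lemma Psi1_eq_tsum_psi1Coeff (q p A B C D X Y : ℂ) :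
    Psi1 q p A B C D X Y = ∑' kl, psi1Coeff q p A B C D kl * X ^ kl.1 * Y ^ kl.2 :=
  rfl

lemma exists_norm_psi1Coeff_le (hq : ‖q‖ < 1) (hp : ‖p‖ < 1) (A B C D : ℂ) :
    ∃ M, ∀ kl, ‖psi1Coeff q p A B C D kl‖ ≤ M := by
  obtain ⟨MA, hA⟩ := exists_norm_qPoch_le hq A
  obtain ⟨MB, hB⟩ := exists_norm_qPoch_le hp B
  obtain ⟨MC, hC⟩ := exists_inv_norm_qPoch_le hp C
  obtain ⟨MD, hD⟩ := exists_inv_norm_qPoch_le hq D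
  obtain ⟨MQ, hQ⟩ := exists_inv_norm_qPoch_le hq q
  obtain ⟨MP, hP⟩ := exists_inv_norm_qPoch_le hp p
  refine ⟨MA * MB * (MC * MD * MQ * MP), fun ⟨k, l⟩ => ?_⟩
  have hMA : 0 ≤ MA := (norm_nonneg _).trans (hA 0)
  have hMB : 0 ≤ MB := (norm_nonneg _).trans (hB 0)
  have hMC : 0 ≤ MC := (inv_nonneg.mpr (norm_nonneg _)).trans (hC 0)
  have hMD : 0 ≤ MD := (inv_nonneg.mpr (norm_nonneg _)).trans (hD 0)
  have hMQ : 0 ≤ MQ := (inv_nonneg.mpr (norm_nonneg _)).trans (hQ 0)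
  simp only [psi1Coeff, div_eq_mul_inv, mul_inv, norm_mul, norm_inv]
  gcongr
  exacts [hA _, hB _, hC _, hD _, hQ _, hP _]

lemma summable_psi1Coeff_mul_pow_mul_pow (hq : ‖q‖ < 1) (hp : ‖p‖ < 1) (A B C D : ℂ) {X Y : ℂ}
    (hX : ‖X‖ < 1) (hY : ‖Y‖ < 1) :
    Summable fun kl => psi1Coeff q p A B C D kl * X ^ kl.1 * Y ^ kl.2 :=
  let ⟨_, hM⟩ := exists_norm_psi1Coeff_le hq hp A B C D
  summable_mul_pow_mul_pow hM hX hY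

lemma one_sub_mul_psi1Coeff_mul (q p A B C D : ℂ) (kl : ℕ × ℕ) :
    (1 - A) * psi1Coeff q p (A * q) B C D kl =
      psi1Coeff q p A B C D kl * (1 - A * q ^ (kl.1 + kl.2)) := by
  simp only [psi1Coeff, mul_div_assoc, ← mul_assoc, one_sub_mul_qPoch_mul]
  ring

lemma one_sub_mul_Psi1_mul (hq : ‖q‖ < 1) (hp : ‖p‖ < 1) (A B C D : ℂ) {X Y : ℂ}
    (hX : ‖X‖ < 1) (hY : ‖Y‖ < 1) :
    (1 - A) * Psi1 q p (A * q) B C D X Y =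
      Psi1 q p A B C D X Y - A * Psi1 q p A B C D (q * X) (q * Y) := by
  have hqX : ‖q * X‖ < 1 := by
    rw [norm_mul]; exact mul_lt_one_of_nonneg_of_lt_one_left (norm_nonneg q) hq hX.le
  have hqY : ‖q * Y‖ < 1 := by
    rw [norm_mul]; exact mul_lt_one_of_nonneg_of_lt_one_left (norm_nonneg q) hq hY.le
  simp only [Psi1_eq_tsum_psi1Coeff, ← tsum_mul_left]
  rw [← (summable_psi1Coeff_mul_pow_mul_pow hq hp A B C D hX hY).tsum_sub
    ((summable_psi1Coeff_mul_pow_mul_pow hq hp A B C D hqX hqY).mul_left A)]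
  refine tsum_congr fun kl => ?_
  linear_combination X ^ kl.1 * Y ^ kl.2 * one_sub_mul_psi1Coeff_mul q p A B C D kl

end Psi1

lemma mul_qDiff {q : ℂ} (hq : q ≠ 1) (f : ℂ → ℂ) (x : ℂ) :
    (1 - q) * x * qDiff q f x = f x - f (q * x) := by
  rcases eq_or_ne x 0 with rfl | hx
  · simp
  · rw [qDiff, mul_div_cancel₀ _ (mul_ne_zero (sub_ne_zero.mpr hq.symm) hx)]

theorem stmt11_general (q p a b c d x y : ℂ)
    (hq0 : 0 < ‖q‖) (hq1 : ‖q‖ < 1)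
    (hp1 : ‖p‖ < 1)
    (hx : ‖x‖ < 1) (hxy : ‖x * y‖ < 1) :
    (1 - q ^ a) * Psi1 q p (q ^ (a + 1)) (p ^ b) (p ^ c) (q ^ d) x (x * y) =
      (1 - q ^ a) * Psi1 q p (q ^ a) (p ^ b) (p ^ c) (q ^ d) x (x * y) +
        (1 - q) * q ^ a * x *
          qDiff q (fun t => Psi1 q p (q ^ a) (p ^ b) (p ^ c) (q ^ d) t (t * y)) x := by
  have hq_ne_one : q ≠ 1 := by rintro rfl; simp at hq1
  have hq_pow : q ^ (a + 1) = q ^ a * q := by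
    rw [Complex.cpow_add _ _ (norm_pos_iff.mp hq0), Complex.cpow_one]
  rw [hq_pow, one_sub_mul_Psi1_mul hq1 hp1 _ _ _ _ hx hxy,
    show (1 - q) * q ^ a * x = q ^ a * ((1 - q) * x) by ring, mul_assoc, mul_qDiff hq_ne_one,
    mul_assoc q x y]
  ring

theorem stmt11 (q p a b c d x y : ℂ)
    (hq0 : 0 < ‖q‖) (hq1 : ‖q‖ < 1)
    (hp0 : 0 < ‖p‖) (hp1 : ‖p‖ < 1)
    (hx : ‖x‖ < 1) (hxy : ‖x * y‖ < 1) :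
    (1 - q ^ a) * Psi1 q p (q ^ (a + 1)) (p ^ b) (p ^ c) (q ^ d) x (x * y) =
      (1 - q ^ a) * Psi1 q p (q ^ a) (p ^ b) (p ^ c) (q ^ d) x (x * y) +
        (1 - q) * q ^ a * x *
          qDiff q (fun t => Psi1 q p (q ^ a) (p ^ b) (p ^ c) (q ^ d) t (t * y)) x :=
  stmt11_general q p a b c d x y hq0 hq1 hp1 hx hxy
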